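/- (Upper bound on RLL redundancy via the Lovász local lemma.) Let Q > R ≥ 1, ℓ ≥ 1, and n ≥ ℓ be integers, Σ a finite alphabet with |Σ| = Q, and Σ' ⊆ Σ with |Σ'| = R. Set π₁ = (R/Q)^ℓ and π = (R/Q)^ℓ·(1 − R/Q). If e·((2ℓ+2)·π + π₁) ≤ 1 and e·((ℓ−1)·π + π₁) ≤ 1, then |RLL_{Q,R}(ℓ,n)| ≥ Q^n · exp(−e·(π₁ + (n−ℓ)·π)), and consequently the redundancy satisfies red(RLL_{Q,R}(ℓ,n)) ≤ e·log_Q(e)·(R/Q)^ℓ·(1 + (1 − R/Q)·(n−ℓ)). -/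

import Mathlib

open Finset Real

/-- A sequence `x ∈ Σⁿ` is `ℓ`-run-length-limited if every window of `ℓ`
consecutive symbols contains at least one symbol outside `S'`. -/
def IsRLL {σ : Type*} (S' : Finset σ) (ℓ : ℕ) {n : ℕ} (x : Fin n → σ) : Prop :=
  ∀ i : ℕ, (h : i + ℓ ≤ n) → ∃ k : ℕ, ∃ hk : k < ℓ, x ⟨i + k, by omega⟩ ∉ S'

/-!
Let `F k = |RLL(ℓ, k)| / Q ^ k` and `r = R / Q`. Prepending a symbol to an `ℓ`-RLL word keeps it
`ℓ`-RLL unless the first `ℓ` symbols of the new word lie in `Σ'`; then the next symbol lies outside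
`Σ'` and the rest is `ℓ`-RLL. Counting these exceptional words gives the delay recurrence
`F (ℓ + t + 1) ≥ F (ℓ + t) - p F t` with `p = r ^ ℓ (1 - r)`, and `F ℓ ≥ 1 - π₁`. For
`β = exp (-e p)` the hypothesis yields the local-lemma condition `p ≤ (1 - β) (1 - π₁) β ^ ℓ`,
under which an induction shows `F (k + 1) ≥ β F k` for all `k ≥ ℓ`. Hence
`F n ≥ (1 - π₁) β ^ (n - ℓ) ≥ exp (-e (π₁ + (n - ℓ) p))`, using `1 - π₁ ≥ exp (-e π₁)`.
-/

theorem Set.ncard_preimage_equiv_prod {α β γ : Type*} (e : α ≃ β × γ) (s : Set β) (t : Set γ) :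
    (e ⁻¹' (s ×ˢ t)).ncard = s.ncard * t.ncard := by
  rw [Set.ncard_preimage_of_injective_subset_range e.injective (by simp), Set.ncard_prod]

theorem Set.ncard_setOf_forall_mem {ι α : Type*} [Fintype ι] [DecidableEq ι] (s : Finset α) :
    {w : ι → α | ∀ j, w j ∈ s}.ncard = s.card ^ Fintype.card ι := by
  have h : {w : ι → α | ∀ j, w j ∈ s} = ↑(Fintype.piFinset fun _ : ι => s) := by
    ext; simp
  rw [h, Set.ncard_coe_finset, Fintype.card_piFinset, prod_const, card_univ]

namespace Real

theorem exp_neg_mul_add_one_le_one (x : ℝ) : exp (-x) * (x + 1) ≤ 1 :=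
  calc exp (-x) * (x + 1) ≤ exp (-x) * exp x :=
        mul_le_mul_of_nonneg_left (add_one_le_exp x) (exp_pos _).le
    _ = 1 := by rw [← exp_add, neg_add_cancel, exp_zero]

theorem exp_neg_exp_one_mul_le_one_sub {q : ℝ} (hq : 0 ≤ q) (h : exp 1 * q ≤ 1) :
    exp (-(exp 1 * q)) ≤ 1 - q := by
  have he : 2 ≤ exp 1 := by linarith [add_one_le_exp 1]
  have hpos : 0 < exp 1 * q + 1 := by positivity
  have hprod : 1 ≤ (1 - q) * (exp 1 * q + 1) := by nlinarith
  exact le_of_mul_le_mul_right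
    ((exp_neg_mul_add_one_le_one _).trans hprod) hpos

theorem le_one_sub_exp_neg_mul_pow {p q : ℝ} (ℓ : ℕ) (hp : 0 ≤ p) (hq : 0 ≤ q)
    (h : exp 1 * ((2 * ℓ + 2) * p + q) ≤ 1) :
    p ≤ (1 - exp (-(exp 1 * p))) * (1 - q) * exp (-(exp 1 * p)) ^ ℓ := by
  set v := exp 1 * p with hv_def
  set u := exp 1 * q with hu_def
  have he : 2 ≤ exp 1 := by linarith [add_one_le_exp 1]
  have hv : 0 ≤ v := by positivity
  have hu : 0 ≤ u := by positivity
  have huv : (2 * ℓ + 2) * v + u ≤ 1 := by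
    linarith [show exp 1 * ((2 * ℓ + 2) * p + q) = (2 * ℓ + 2) * v + u by ring]
  have hpow : 1 - ℓ * v ≤ exp (-v) ^ ℓ := by
    rw [← exp_nat_mul, mul_neg]
    exact one_sub_le_exp_neg _
  have hgap : v ≤ (1 - exp (-v)) * (v + 1) := by linarith [exp_neg_mul_add_one_le_one v]
  have hℓv : 0 ≤ ℓ * v := by positivity
  have hu₁ : u ≤ 1 := by linarith
  -- `1 - exp (-v) ≥ v / (v + 1)` and `exp (-v) ^ ℓ ≥ 1 - ℓ v` reduce the claim to this
  have hmain : v + 1 ≤ (exp 1 - u) * (1 - ℓ * v) := by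
    nlinarith [mul_nonneg (by linarith : 0 ≤ exp 1 - u)
        (by linarith : 0 ≤ (1 - ℓ * v) - (1 + u + 2 * v) / 2),
      mul_nonneg hu (by linarith : 0 ≤ exp 1 - 1 - u),
      mul_nonneg hv (by linarith : 0 ≤ exp 1 - u - 1)]
  have hq₁ : 0 ≤ 1 - q := by nlinarith
  have hβ : 0 ≤ 1 - exp (-v) := sub_nonneg.2 (exp_le_one_iff.2 (by linarith))
  refine le_of_mul_le_mul_right ?_ (by linarith : 0 < v + 1)
  calc p * (v + 1) ≤ p * ((exp 1 - u) * (1 - ℓ * v)) := mul_le_mul_of_nonneg_left hmain hp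
    _ = v * (1 - q) * (1 - ℓ * v) := by rw [hv_def, hu_def]; ring
    _ ≤ (1 - exp (-v)) * (v + 1) * (1 - q) * (1 - ℓ * v) := by gcongr; linarith
    _ ≤ (1 - exp (-v)) * (v + 1) * (1 - q) * exp (-v) ^ ℓ := by gcongr
    _ = (1 - exp (-v)) * (1 - q) * exp (-v) ^ ℓ * (v + 1) := by ring

theorem sub_logb_le_of_pow_mul_exp_neg_le {b N a : ℝ} (hb : 1 < b) (n : ℕ)
    (h : b ^ n * exp (-a) ≤ N) : n - logb b N ≤ a * logb b (exp 1) := by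
  have hmono := logb_le_logb_of_le hb (by positivity) h
  rw [logb_mul (by positivity) (exp_pos _).ne', logb_pow, logb_self_eq_one hb, mul_one] at hmono
  have hexp : logb b (exp (-a)) = -(a * logb b (exp 1)) := by
    simp only [logb, log_exp]
    ring
  linarith

end Real

theorem pow_mul_le_of_mul_le_succ {F : ℕ → ℝ} {β : ℝ} (hβ : 0 ≤ β) {a : ℕ} :
    ∀ {j : ℕ}, (∀ s, a ≤ s → s < a + j → β * F s ≤ F (s + 1)) → β ^ j * F a ≤ F (a + j)
  | 0, _ => by simp
  | j + 1, h =>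
    calc β ^ (j + 1) * F a = β * (β ^ j * F a) := by ring
      _ ≤ β * F (a + j) :=
        mul_le_mul_of_nonneg_left (pow_mul_le_of_mul_le_succ hβ fun s h₁ h₂ => h s h₁ (by omega)) hβ
      _ ≤ F (a + j + 1) := h _ (by omega) (by omega)

theorem mul_pow_le_of_delay_recurrence {F : ℕ → ℝ} {p β : ℝ} (ℓ : ℕ) (hp : 0 ≤ p)
    (hβ₀ : 0 ≤ β) (hβ₁ : β ≤ 1) (hF₀ : ∀ k, 0 ≤ F k) (hF₁ : ∀ k ≤ ℓ, F k ≤ 1)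
    (hpβ : p ≤ (1 - β) * F ℓ * β ^ ℓ) (hrec : ∀ t, F (ℓ + t) - p * F t ≤ F (ℓ + t + 1))
    (t : ℕ) : F ℓ * β ^ t ≤ F (ℓ + t) := by
  have hratio : ∀ t s, ℓ ≤ s → s < ℓ + t → β * F s ≤ F (s + 1) := by
    intro t
    induction t with
    | zero => intro s _ _; omega
    | succ t ih =>
      intro s hs hst
      obtain hlt | rfl : s < ℓ + t ∨ s = ℓ + t := by omega
      · exact ih s hs hlt
      suffices p * F t ≤ (1 - β) * F (ℓ + t) by linarith [hrec t]
      rcases le_total t ℓ with hshort | hlong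
      · calc
          p * F t ≤ p := mul_le_of_le_one_right hp (hF₁ t hshort)
          _ ≤ (1 - β) * F ℓ * β ^ t :=
            hpβ.trans (mul_le_mul_of_nonneg_left (pow_le_pow_of_le_one hβ₀ hβ₁ hshort)
              (mul_nonneg (by linarith) (hF₀ ℓ)))
          _ ≤ (1 - β) * F (ℓ + t) := by
            rw [mul_assoc, mul_comm (F ℓ)]
            exact mul_le_mul_of_nonneg_left (pow_mul_le_of_mul_le_succ hβ₀ ih) (by linarith)
      · have hpβ' : p ≤ (1 - β) * β ^ ℓ := by
          refine hpβ.trans ?_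
          rw [mul_right_comm]
          exact mul_le_of_le_one_right (mul_nonneg (by linarith) (pow_nonneg hβ₀ ℓ)) (hF₁ ℓ le_rfl)
        calc
          p * F t ≤ (1 - β) * (β ^ ℓ * F t) := by
            rw [← mul_assoc]
            exact mul_le_mul_of_nonneg_right hpβ' (hF₀ t)
          _ ≤ (1 - β) * F (ℓ + t) := by
            rw [add_comm ℓ t]
            refine mul_le_mul_of_nonneg_left ?_ (by linarith)
            exact pow_mul_le_of_mul_le_succ hβ₀ fun s h₁ h₂ => ih s (by omega) (by omega)
  rw [mul_comm]
  exact pow_mul_le_of_mul_le_succ hβ₀ (hratio t)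

section RLL

variable {σ : Type*} {S' : Finset σ} {ℓ : ℕ}

theorem IsRLL.comp_natAdd {a b : ℕ} {x : Fin (a + b) → σ} (hx : IsRLL S' ℓ x) :
    IsRLL S' ℓ (x ∘ Fin.natAdd a) := by
  intro i hi
  obtain ⟨k, hk, hne⟩ := hx (a + i) (by omega)
  exact ⟨k, hk, by simpa [Fin.natAdd, add_assoc] using hne⟩

theorem forall_mem_of_not_isRLL {x : Fin ℓ → σ} (hx : ¬ IsRLL S' ℓ x) (j : Fin ℓ) : x j ∈ S' := by
  by_contra hj
  exact hx fun i hi => ⟨j, j.2, by simpa [show i = 0 by omega] using hj⟩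

variable (S' ℓ) in
/-- The words `w ++ a :: y` with `w ∈ S'^ℓ`, `a ∉ S'` and `y` an `ℓ`-RLL word of length `t`. -/
def runThenRLL (t : ℕ) : Set (Fin (ℓ + (t + 1)) → σ) :=
  (Fin.appendEquiv ℓ (t + 1)).symm ⁻¹'
    ({w | ∀ j, w j ∈ S'} ×ˢ ((Fin.consEquiv fun _ => σ).symm ⁻¹' ((↑S')ᶜ ×ˢ {y | IsRLL S' ℓ y})))

theorem isRLL_or_mem_runThenRLL {t : ℕ} {x : Fin (ℓ + (t + 1)) → σ}
    (h : IsRLL S' ℓ (Fin.tail (n := ℓ + t) x)) : IsRLL S' ℓ x ∨ x ∈ runThenRLL S' ℓ t := by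
  by_cases hw : ∀ j : Fin ℓ, x (Fin.castAdd (t + 1) j) ∈ S'
  · right
    refine ⟨hw, ?_, h.comp_natAdd⟩
    -- the first window of `tail x` can only leave `S'` at its last position
    obtain ⟨k, hk, hk'⟩ := h 0 (by omega)
    simp only [zero_add] at hk'
    obtain rfl : k = ℓ - 1 := by
      by_contra hne
      exact hk' (hw ⟨k + 1, by omega⟩)
    simpa [Fin.tail, Fin.succ, Fin.natAdd, show ℓ - 1 + 1 = ℓ by omega] using hk'
  · left
    push Not at hw
    obtain ⟨j, hj⟩ := hw
    rintro (_ | i) hi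
    · exact ⟨j, j.2, by simp only [zero_add]; exact hj⟩
    · obtain ⟨k, hk, hne⟩ := h i (by omega)
      exact ⟨k, hk, by simpa [Fin.tail, Fin.succ, add_right_comm] using hne⟩

variable [Fintype σ]

variable (S' ℓ) in
noncomputable def rllCount (k : ℕ) : ℕ := {x : Fin k → σ | IsRLL S' ℓ x}.ncard

theorem rllCount_le (k : ℕ) : rllCount S' ℓ k ≤ Fintype.card σ ^ k :=
  (Set.ncard_le_card _).trans_eq (by simp [Nat.card_eq_fintype_card])

theorem card_pow_le_rllCount_self_add : Fintype.card σ ^ ℓ ≤ rllCount S' ℓ ℓ + S'.card ^ ℓ := by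
  calc Fintype.card σ ^ ℓ = rllCount S' ℓ ℓ + {x : Fin ℓ → σ | IsRLL S' ℓ x}ᶜ.ncard := by
        rw [rllCount, Set.ncard_add_ncard_compl]; simp [Nat.card_eq_fintype_card]
    _ ≤ rllCount S' ℓ ℓ + S'.card ^ ℓ := by
        refine Nat.add_le_add_left ?_ _
        calc _ ≤ {w : Fin ℓ → σ | ∀ j, w j ∈ S'}.ncard :=
              Set.ncard_le_ncard fun x hx => forall_mem_of_not_isRLL hx
          _ = S'.card ^ ℓ := by rw [Set.ncard_setOf_forall_mem, Fintype.card_fin]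

theorem ncard_runThenRLL (t : ℕ) :
    (runThenRLL S' ℓ t).ncard = S'.card ^ ℓ * ((Fintype.card σ - S'.card) * rllCount S' ℓ t) := by
  rw [runThenRLL, Set.ncard_preimage_equiv_prod, Set.ncard_preimage_equiv_prod,
    Set.ncard_setOf_forall_mem, Fintype.card_fin, Set.ncard_compl, Set.ncard_coe_finset,
    Nat.card_eq_fintype_card, rllCount]

theorem card_mul_rllCount_le (t : ℕ) :
    Fintype.card σ * rllCount S' ℓ (ℓ + t) ≤
      rllCount S' ℓ (ℓ + t + 1) + S'.card ^ ℓ * ((Fintype.card σ - S'.card) * rllCount S' ℓ t) := by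
  calc Fintype.card σ * rllCount S' ℓ (ℓ + t)
      = ((Fin.consEquiv fun _ : Fin (ℓ + t + 1) => σ).symm ⁻¹'
          (Set.univ ×ˢ {y | IsRLL S' ℓ y})).ncard := by
        rw [Set.ncard_preimage_equiv_prod, Set.ncard_univ, Nat.card_eq_fintype_card, rllCount]
    _ ≤ ({x | IsRLL S' ℓ x} ∪ runThenRLL S' ℓ t).ncard :=
        Set.ncard_le_ncard fun x hx => isRLL_or_mem_runThenRLL hx.2
    _ ≤ rllCount S' ℓ (ℓ + t + 1) + (runThenRLL S' ℓ t).ncard := Set.ncard_union_le _ _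
    _ = _ := by rw [ncard_runThenRLL]

variable (S' ℓ) in
noncomputable def rllDensity (k : ℕ) : ℝ := rllCount S' ℓ k / (Fintype.card σ : ℝ) ^ k

theorem rllDensity_nonneg (k : ℕ) : 0 ≤ rllDensity S' ℓ k := by
  unfold rllDensity; positivity

theorem rllDensity_le_one (k : ℕ) : rllDensity S' ℓ k ≤ 1 :=
  div_le_one_of_le₀ (by exact_mod_cast rllCount_le k) (by positivity)

variable [Nonempty σ]

theorem one_sub_pow_le_rllDensity_self :
    1 - ((S'.card : ℝ) / Fintype.card σ) ^ ℓ ≤ rllDensity S' ℓ ℓ := by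
  have hQ : (0 : ℝ) < Fintype.card σ := by exact_mod_cast Fintype.card_pos
  have h : (Fintype.card σ : ℝ) ^ ℓ ≤ rllCount S' ℓ ℓ + (S'.card : ℝ) ^ ℓ := by
    exact_mod_cast card_pow_le_rllCount_self_add
  rw [rllDensity, div_pow, le_div_iff₀ (by positivity), sub_mul, div_mul_cancel₀ _ (by positivity)]
  linarith

theorem rllDensity_sub_mul_le_succ (t : ℕ) :
    rllDensity S' ℓ (ℓ + t) - ((S'.card : ℝ) / Fintype.card σ) ^ ℓ *
        (1 - (S'.card : ℝ) / Fintype.card σ) * rllDensity S' ℓ t ≤ rllDensity S' ℓ (ℓ + t + 1) := by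
  have hQ : (0 : ℝ) < Fintype.card σ := by exact_mod_cast Fintype.card_pos
  have h : (Fintype.card σ : ℝ) * rllCount S' ℓ (ℓ + t) ≤ rllCount S' ℓ (ℓ + t + 1) +
      (S'.card : ℝ) ^ ℓ * ((Fintype.card σ - S'.card) * rllCount S' ℓ t) := by
    have h := card_mul_rllCount_le (S' := S') (ℓ := ℓ) t
    rw [← Nat.cast_le (α := ℝ)] at h
    push_cast [Nat.cast_sub (card_le_univ S')] at h
    exact h
  rw [rllDensity, rllDensity, rllDensity, div_pow, pow_succ, pow_add]
  field_simp
  linarith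

theorem exp_neg_le_rllDensity {p₁ p : ℝ}
    (hp₁ : p₁ = ((S'.card : ℝ) / Fintype.card σ) ^ ℓ)
    (hp : p = ((S'.card : ℝ) / Fintype.card σ) ^ ℓ * (1 - (S'.card : ℝ) / Fintype.card σ))
    (h : exp 1 * ((2 * ℓ + 2) * p + p₁) ≤ 1) (t : ℕ) :
    exp (-(exp 1 * (p₁ + t * p))) ≤ rllDensity S' ℓ (ℓ + t) := by
  have hr₀ : 0 ≤ (S'.card : ℝ) / Fintype.card σ := by positivity
  have hr₁ : (S'.card : ℝ) / Fintype.card σ ≤ 1 :=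
    div_le_one_of_le₀ (by exact_mod_cast card_le_univ S') (by positivity)
  have hp₀ : 0 ≤ p := hp ▸ mul_nonneg (pow_nonneg hr₀ ℓ) (sub_nonneg.2 hr₁)
  have hp₁₀ : 0 ≤ p₁ := hp₁ ▸ pow_nonneg hr₀ ℓ
  have hp₁e : exp 1 * p₁ ≤ 1 := by
    nlinarith [mul_nonneg (exp_pos 1).le (mul_nonneg (by positivity : (0 : ℝ) ≤ 2 * ℓ + 2) hp₀)]
  have hFℓ : 1 - p₁ ≤ rllDensity S' ℓ ℓ := hp₁ ▸ one_sub_pow_le_rllDensity_self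
  set β := exp (-(exp 1 * p))
  have hβ₁ : β ≤ 1 := exp_le_one_iff.2 (neg_nonpos.2 (by positivity))
  have hpβ : p ≤ (1 - β) * rllDensity S' ℓ ℓ * β ^ ℓ :=
    (le_one_sub_exp_neg_mul_pow ℓ hp₀ hp₁₀ h).trans (by gcongr)
  calc exp (-(exp 1 * (p₁ + t * p))) = exp (-(exp 1 * p₁)) * β ^ t := by
        rw [← exp_nat_mul, ← exp_add]; ring_nf
    _ ≤ rllDensity S' ℓ ℓ * β ^ t := by
        gcongr
        exact (exp_neg_exp_one_mul_le_one_sub hp₁₀ hp₁e).trans hFℓ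
    _ ≤ rllDensity S' ℓ (ℓ + t) :=
        mul_pow_le_of_delay_recurrence ℓ hp₀ (exp_pos _).le hβ₁ rllDensity_nonneg
          (fun k _ => rllDensity_le_one k) hpβ (fun t => hp ▸ rllDensity_sub_mul_le_succ t) t

end RLL

theorem rll_redundancy_upper_bound_lll_general {σ : Type*} [Fintype σ] (Q R ℓ n : ℕ)
    (hR : 1 ≤ R) (hQR : R < Q) (hn : ℓ ≤ n)
    (hσ : Fintype.card σ = Q) (S' : Finset σ) (hS' : S'.card = R)
    (p₁ p : ℝ)
    (hp₁ : p₁ = ((R : ℝ) / Q) ^ ℓ)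
    (hp : p = ((R : ℝ) / Q) ^ ℓ * (1 - (R : ℝ) / Q))
    (h1 : Real.exp 1 * ((2 * (ℓ : ℝ) + 2) * p + p₁) ≤ 1) :
    (Q : ℝ) ^ n * Real.exp (-(Real.exp 1) * (p₁ + ((n : ℝ) - (ℓ : ℝ)) * p)) ≤
        ({x : Fin n → σ | IsRLL S' ℓ x}.ncard : ℝ) ∧
      (n : ℝ) - Real.logb Q ({x : Fin n → σ | IsRLL S' ℓ x}.ncard) ≤
        Real.exp 1 * Real.logb Q (Real.exp 1) * ((R : ℝ) / Q) ^ ℓ *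
          (1 + (1 - (R : ℝ) / Q) * ((n : ℝ) - (ℓ : ℝ))) := by
  subst hσ hS'
  have : Nonempty σ := Fintype.card_pos_iff.mp (by omega)
  have hcount : (Fintype.card σ : ℝ) ^ n * exp (-(exp 1 * (p₁ + (n - ℓ) * p))) ≤
      ({x : Fin n → σ | IsRLL S' ℓ x}.ncard : ℝ) := by
    obtain ⟨t, rfl⟩ := Nat.exists_eq_add_of_le hn
    have h := exp_neg_le_rllDensity hp₁ hp h1 t
    rw [rllDensity, le_div_iff₀ (by positivity), rllCount] at h
    push_cast
    rwa [add_sub_cancel_left, mul_comm]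
  have hQ : (1 : ℝ) < Fintype.card σ := by exact_mod_cast (by omega : 1 < Fintype.card σ)
  refine ⟨by rwa [neg_mul], ?_⟩
  calc _ ≤ exp 1 * (p₁ + (n - ℓ) * p) * logb (Fintype.card σ) (exp 1) :=
        sub_logb_le_of_pow_mul_exp_neg_le hQ n hcount
    _ = _ := by rw [hp, hp₁]; ring

/-- Upper bound on RLL redundancy via the Lovász local lemma. -/
theorem rll_redundancy_upper_bound_lll {σ : Type*} [Fintype σ] (Q R ℓ n : ℕ)
    (hR : 1 ≤ R) (hQR : R < Q) (hℓ : 1 ≤ ℓ) (hn : ℓ ≤ n)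
    (hσ : Fintype.card σ = Q) (S' : Finset σ) (hS' : S'.card = R)
    (p₁ p : ℝ)
    (hp₁ : p₁ = ((R : ℝ) / Q) ^ ℓ)
    (hp : p = ((R : ℝ) / Q) ^ ℓ * (1 - (R : ℝ) / Q))
    (h1 : Real.exp 1 * ((2 * (ℓ : ℝ) + 2) * p + p₁) ≤ 1)
    (h2 : Real.exp 1 * (((ℓ : ℝ) - 1) * p + p₁) ≤ 1) :
    (Q : ℝ) ^ n * Real.exp (-(Real.exp 1) * (p₁ + ((n : ℝ) - (ℓ : ℝ)) * p)) ≤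
        ({x : Fin n → σ | IsRLL S' ℓ x}.ncard : ℝ) ∧
      (n : ℝ) - Real.logb Q ({x : Fin n → σ | IsRLL S' ℓ x}.ncard) ≤
        Real.exp 1 * Real.logb Q (Real.exp 1) * ((R : ℝ) / Q) ^ ℓ *
          (1 + (1 - (R : ℝ) / Q) * ((n : ℝ) - (ℓ : ℝ))) :=
  rll_redundancy_upper_bound_lll_general Q R ℓ n hR hQR hn hσ S' hS' p₁ p hp₁ hp h1
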